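/- arXiv:1904.09759 — 3 statements merged into one kernel-verified Lean document; each statement's English description precedes it below -/
import Mathlib

section
/- Let n ≥ 2 be an integer and let 0 < b ≤ 1. If x > 0 satisfies x · ∫₀^b (cosh t + x · sinh t)^{n-1} dt = ∫₀^π (sin t)^{n-1} dt, then b · x ≥ ω_n / ((e + e⁻¹)/2 + 2·ω_n)^{n-1}, where ω_n := ∫₀^π (sin t)^{n-1} dt and e is Euler's number. -/
/-!
Write `f t = cosh t + x sinh t`, which is increasing on `[0, b]` with `1 ≤ cosh t ≤ f t`.
From `f ^ (n - 1) ≥ cosh` we get `x sinh b ≤ x ∫₀^b f ^ (n - 1) = ω_n`, hence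
`f b ≤ cosh 1 + ω_n`; and from `f ^ (n - 1) ≤ f b ^ (n - 1)` we get `ω_n ≤ b x f(b) ^ (n - 1)`.
-/

open Real intervalIntegral

section CoshAddMulSinh

variable {x b : ℝ}

theorem cosh_le_cosh_add_mul_sinh (hx : 0 ≤ x) {t : ℝ} (ht : 0 ≤ t) :
    cosh t ≤ cosh t + x * sinh t :=
  le_add_of_nonneg_right (mul_nonneg hx (sinh_nonneg_iff.mpr ht))

theorem monotoneOn_cosh_add_mul_sinh (hx : 0 ≤ x) :
    MonotoneOn (fun t => cosh t + x * sinh t) (Set.Ici 0) := by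
  intro s hs t ht hst
  have hcosh : cosh s ≤ cosh t := by
    rwa [cosh_le_cosh, abs_of_nonneg hs, abs_of_nonneg ht]
  exact add_le_add hcosh (mul_le_mul_of_nonneg_left (sinh_le_sinh.mpr hst) hx)

theorem continuous_pow_cosh_add_mul_sinh (k : ℕ) :
    Continuous fun t => (cosh t + x * sinh t) ^ k := by
  fun_prop

theorem sinh_le_integral_pow_cosh_add_mul_sinh {k : ℕ} (hk : k ≠ 0) (hx : 0 ≤ x) (hb : 0 ≤ b) :
    sinh b ≤ ∫ t in (0 : ℝ)..b, (cosh t + x * sinh t) ^ k := by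
  have hsinh : ∫ t in (0 : ℝ)..b, cosh t = sinh b := by
    rw [integral_eq_sub_of_hasDerivAt (fun t _ => hasDerivAt_sinh t)
      (continuous_cosh.intervalIntegrable _ _), sinh_zero, sub_zero]
  rw [← hsinh]
  refine integral_mono_on hb (continuous_cosh.intervalIntegrable _ _)
    ((continuous_pow_cosh_add_mul_sinh k).intervalIntegrable _ _) fun t ht => ?_
  have hf := cosh_le_cosh_add_mul_sinh hx ht.1
  exact hf.trans (le_self_pow₀ ((one_le_cosh t).trans hf) hk)

theorem integral_pow_cosh_add_mul_sinh_le (k : ℕ) (hx : 0 ≤ x) (hb : 0 ≤ b) :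
    ∫ t in (0 : ℝ)..b, (cosh t + x * sinh t) ^ k ≤ b * (cosh b + x * sinh b) ^ k := by
  have hmono := monotoneOn_cosh_add_mul_sinh hx
  calc ∫ t in (0 : ℝ)..b, (cosh t + x * sinh t) ^ k
      ≤ ∫ _ in (0 : ℝ)..b, (cosh b + x * sinh b) ^ k := by
        refine integral_mono_on hb ((continuous_pow_cosh_add_mul_sinh k).intervalIntegrable _ _)
          intervalIntegrable_const fun t ht => ?_
        have hf := cosh_le_cosh_add_mul_sinh hx ht.1
        exact pow_le_pow_left₀ ((cosh_pos t).le.trans hf)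
          (hmono ht.1 (Set.mem_Ici.mpr hb) ht.2) k
    _ = b * (cosh b + x * sinh b) ^ k := by simp

end CoshAddMulSinh

/-- If `n ≥ 2`, `0 < b ≤ 1` and `x > 0` satisfies
`x * ∫_0^b (cosh t + x sinh t)^(n-1) dt = ω_n` where `ω_n = ∫_0^π (sin t)^(n-1) dt`,
then `b * x ≥ ω_n / ((e + e⁻¹)/2 + 2 ω_n)^(n-1)`. -/
theorem mul_root_ge (n : ℕ) (hn : 2 ≤ n) (b : ℝ) (hb : 0 < b) (hb1 : b ≤ 1)
    (x : ℝ) (hx : 0 < x)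
    (heq : x * (∫ t in (0:ℝ)..b, (Real.cosh t + x * Real.sinh t) ^ (n - 1)) =
      ∫ t in (0:ℝ)..Real.pi, Real.sin t ^ (n - 1)) :
    b * x ≥ (∫ t in (0:ℝ)..Real.pi, Real.sin t ^ (n - 1)) /
      ((Real.exp 1 + (Real.exp 1)⁻¹) / 2 +
        2 * ∫ t in (0:ℝ)..Real.pi, Real.sin t ^ (n - 1)) ^ (n - 1) := by
  set ω := ∫ t in (0:ℝ)..π, sin t ^ (n - 1)
  have hω : 0 < ω := integral_sin_pow_pos (n - 1)
  have hsinh : x * sinh b ≤ ω := heq ▸ mul_le_mul_of_nonneg_left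
    (sinh_le_integral_pow_cosh_add_mul_sinh (by omega) hx.le hb.le) hx.le
  have hcosh : cosh b ≤ (exp 1 + (exp 1)⁻¹) / 2 := by
    rw [← exp_neg, ← cosh_eq, cosh_le_cosh, abs_of_pos hb, abs_one]
    exact hb1
  rw [ge_iff_le, div_le_iff₀ (by positivity)]
  calc ω ≤ b * x * (cosh b + x * sinh b) ^ (n - 1) := by
        rw [← heq, mul_comm b, mul_assoc]
        exact mul_le_mul_of_nonneg_left (integral_pow_cosh_add_mul_sinh_le _ hx.le hb.le) hx.le
    _ ≤ b * x * ((exp 1 + (exp 1)⁻¹) / 2 + 2 * ω) ^ (n - 1) := by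
        have hf := cosh_le_cosh_add_mul_sinh hx.le hb.le
        gcongr b * x * ?_
        exact pow_le_pow_left₀ ((cosh_pos b).le.trans hf) (by linarith) _
end

section
/- Let n ≥ 2 be an integer. There exists a constant a_n > 0 and some b₀ ∈ (0, 1] such that for every b with 0 < b ≤ b₀ and every x > 0 satisfying x · ∫₀^b (cosh t + x · sinh t)^{n-1} dt = ∫₀^π (sin t)^{n-1} dt, one has b · x ≥ a_n. Equivalently, liminf_{b → 0⁺} b · C(b) ≥ a_n > 0. -/
private lemma div_two_aux (c w : ℝ) (hc : c ≠ 0) : w / (2 * c) * c = w / 2 := by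
  field_simp

/-- For every integer `n ≥ 2` there are `a_n > 0` and `b₀ ∈ (0,1]` such that for all
`0 < b ≤ b₀` and every `x > 0` with
`x * ∫_0^b (cosh t + x sinh t)^(n-1) dt = ∫_0^π (sin t)^(n-1) dt`, one has `b * x ≥ a_n`;
i.e. `liminf_{b → 0⁺} b C(b) ≥ a_n > 0`. -/
theorem liminf_mul_root_pos (n : ℕ) (hn : 2 ≤ n) :
    ∃ a : ℝ, 0 < a ∧ ∃ b₀ : ℝ, 0 < b₀ ∧ b₀ ≤ 1 ∧
      ∀ b : ℝ, 0 < b → b ≤ b₀ → ∀ x : ℝ, 0 < x →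
        x * (∫ t in (0:ℝ)..b, (Real.cosh t + x * Real.sinh t) ^ (n - 1)) =
          (∫ t in (0:ℝ)..Real.pi, Real.sin t ^ (n - 1)) →
        a ≤ b * x := by
  set ω := ∫ t in (0:ℝ)..Real.pi, Real.sin t ^ (n - 1) with hωdef
  have hωpos : 0 < ω := integral_sin_pow_pos (n - 1)
  clear_value ω
  have h6 : (0:ℝ) < 6 ^ (n - 1) := by positivity
  refine ⟨min 1 (ω / (2 * 6 ^ (n - 1))), by positivity, 1, one_pos, le_refl 1, ?_⟩
  intro b hb hb1 x hx heq
  by_contra hcon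
  push_neg at hcon
  have hbx : b * x < min 1 (ω / (2 * 6 ^ (n - 1))) := hcon
  have hbx1 : b * x ≤ 1 := (lt_of_lt_of_le hbx (min_le_left _ _)).le
  -- pointwise bound on the integrand
  have key : ∀ t ∈ Set.Icc (0:ℝ) b,
      (Real.cosh t + x * Real.sinh t) ^ (n - 1) ≤ (3 * (1 + x * b)) ^ (n - 1) := by
    intro t ht
    have ht0 : 0 ≤ t := ht.1
    have htb : t ≤ b := ht.2
    have ht1 : t ≤ 1 := le_trans htb hb1
    have hct : 0 < Real.cosh t := Real.cosh_pos t
    have hst : 0 ≤ Real.sinh t := by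
      have := Real.sinh_le_sinh.mpr ht0; simpa using this
    have he1 : Real.exp t ≤ Real.exp 1 := Real.exp_le_exp.mpr ht1
    have he2 : Real.exp 1 < 3 := by
      have := Real.exp_one_lt_d9; linarith
    have hent : Real.exp (-t) ≤ 1 := by
      calc Real.exp (-t) ≤ Real.exp 0 := Real.exp_le_exp.mpr (by linarith)
        _ = 1 := Real.exp_zero
    have hprod : Real.exp t * Real.exp (-t) = 1 := by
      rw [← Real.exp_add]; simp
    have haddone : 1 + (-(2*t)) ≤ Real.exp (-(2*t)) := by
      linarith [Real.add_one_le_exp (-(2*t))]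
    have hsq : Real.exp (-(2*t)) = Real.exp (-t) * Real.exp (-t) := by
      rw [← Real.exp_add]; ring_nf
    have hch : Real.cosh t = (Real.exp t + Real.exp (-t)) / 2 := Real.cosh_eq t
    have hsh : Real.sinh t = (Real.exp t - Real.exp (-t)) / 2 := Real.sinh_eq t
    have hcosh3 : Real.cosh t ≤ 3 := by rw [hch]; nlinarith
    have hsinh : Real.sinh t ≤ 3 * t := by
      rw [hsh]
      nlinarith [Real.exp_pos t, Real.exp_pos (-t)]
    apply pow_le_pow_left₀ (by positivity)
    have hxt : x * (3 * t) ≤ x * (3 * b) := by nlinarith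
    nlinarith
  -- integrability
  have hcont : Continuous fun t => (Real.cosh t + x * Real.sinh t) ^ (n - 1) := by
    continuity
  have hint : IntervalIntegrable (fun t => (Real.cosh t + x * Real.sinh t) ^ (n - 1))
      MeasureTheory.volume 0 b := hcont.intervalIntegrable 0 b
  have hIle : (∫ t in (0:ℝ)..b, (Real.cosh t + x * Real.sinh t) ^ (n - 1))
      ≤ ∫ _t in (0:ℝ)..b, ((3 * (1 + x * b)) ^ (n - 1) : ℝ) :=
    intervalIntegral.integral_mono_on hb.le hint intervalIntegrable_const key
  have hconst : (∫ _t in (0:ℝ)..b, ((3 * (1 + x * b)) ^ (n - 1) : ℝ))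
      = b * (3 * (1 + x * b)) ^ (n - 1) := by
    rw [intervalIntegral.integral_const]; simp [smul_eq_mul]
  have hbase : (3 * (1 + x * b)) ^ (n - 1) ≤ (6:ℝ) ^ (n - 1) := by
    apply pow_le_pow_left₀ (by positivity)
    have hxb : x * b ≤ 1 := by rw [mul_comm]; exact hbx1
    linarith
  have hω2 : ω ≤ x * (b * (6:ℝ) ^ (n - 1)) := by
    calc ω = x * (∫ t in (0:ℝ)..b, (Real.cosh t + x * Real.sinh t) ^ (n - 1)) := heq.symm
      _ ≤ x * (b * (3 * (1 + x * b)) ^ (n - 1)) := by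
          apply mul_le_mul_of_nonneg_left _ hx.le
          rw [← hconst]; exact hIle
      _ ≤ x * (b * (6:ℝ) ^ (n - 1)) := by
          apply mul_le_mul_of_nonneg_left _ hx.le
          exact mul_le_mul_of_nonneg_left hbase hb.le
  have hamin : b * x < ω / (2 * 6 ^ (n - 1)) := lt_of_lt_of_le hbx (min_le_right _ _)
  have : x * (b * (6:ℝ) ^ (n - 1)) < ω / 2 := by
    have h2 : b * x * (6:ℝ) ^ (n - 1) < (ω / (2 * 6 ^ (n - 1))) * 6 ^ (n - 1) :=
      mul_lt_mul_of_pos_right hamin h6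
    have h3 : (ω / (2 * 6 ^ (n - 1))) * 6 ^ (n - 1) = ω / 2 :=
      div_two_aux _ _ (ne_of_gt h6)
    calc x * (b * (6:ℝ) ^ (n - 1)) = b * x * 6 ^ (n - 1) := by ring
      _ < (ω / (2 * 6 ^ (n - 1))) * 6 ^ (n - 1) := h2
      _ = ω / 2 := h3
  linarith
end

section
/- Let G be a group, let H ≤ G be a subgroup of finite index that is finitely generated and nilpotent, and let ρ : G → ℂˣ be a group homomorphism whose restriction to H is nontrivial. Let ℂ_ρ denote the one-dimensional complex representation of G on which each g ∈ G acts by multiplication by ρ(g). Then the first group cohomology H¹(G, ℂ_ρ) vanishes. -/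
/-!
A 1-cocycle `f` for a nontrivial character `ρ` of a nilpotent group is a coboundary: if `ρ` is
nontrivial on some central `z`, comparing `f (z g)` with `f (g z)` gives
`f g = ρ g * x - x` for `x = f z / (ρ z - 1)`; otherwise the same comparison shows that `f`
vanishes on the centre, so `f` and `ρ` descend to the quotient by the centre, of smaller
nilpotency class. Passing from `H` to `G`, subtract that coboundary to get a cocycle vanishing
on `H`; it is then a function on `G ⧸ H`, and averaging `f (g q) = ρ g f q + f g` over the
finitely many cosets `q` exhibits it as a coboundary (we divide by `[G : H]`).
-/

open CategoryTheory

/-- The one-dimensional complex representation of `G` on which `g` acts by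
multiplication by `ρ g`. -/
noncomputable def oneDimRep (G : Type) [Group G] (ρ : G →* ℂˣ) : Representation ℂ G ℂ where
  toFun g := (ρ g : ℂ) • LinearMap.id
  map_one' := by
    simp only [map_one, Units.val_one, one_smul]
    rfl
  map_mul' g h := by
    refine LinearMap.ext fun x => ?_
    simp only [map_mul, Units.val_mul, LinearMap.smul_apply, LinearMap.id_coe, id_eq,
      Module.End.mul_apply, smul_eq_mul]
    ring

variable {G K : Type*} [Group G] [Field K]

/-- The sign conventions are those of `groupCohomology.mem_cocycles₁_iff` and
`groupCohomology.coboundaries₁`, so these are the 1-cocycles and 1-coboundaries of `K_ρ`. -/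
def IsCrossedHom (ρ : G →* Kˣ) (f : G → K) : Prop := ∀ g h, f (g * h) = ρ g * f h + f g

def IsPrincipalCrossedHom (ρ : G →* Kˣ) (f : G → K) : Prop := ∃ x, ∀ g, ρ g * x - x = f g

namespace IsCrossedHom

variable {ρ : G →* Kˣ} {f : G → K}

theorem comp (hf : IsCrossedHom ρ f) {H : Type*} [Group H] (φ : H →* G) :
    IsCrossedHom (ρ.comp φ) (f ∘ φ) := fun g h => by
  simpa using hf (φ g) (φ h)

theorem sub_principal (hf : IsCrossedHom ρ f) (x : K) :
    IsCrossedHom ρ (fun g => f g - (ρ g * x - x)) := fun g h => by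
  simp only [hf g h, map_mul, Units.val_mul]
  ring

theorem mul_sub_one_eq_of_commute (hf : IsCrossedHom ρ f) {z g : G} (hzg : Commute z g) :
    f g * (ρ z - 1) = f z * (ρ g - 1) := by
  have hfzg := hf z g
  rw [hzg.eq, hf g z] at hfzg
  linear_combination -hfzg

theorem isPrincipal_of_mem_center (hf : IsCrossedHom ρ f) {z : G} (hz : z ∈ Subgroup.center G)
    (hρz : ρ z ≠ 1) : IsPrincipalCrossedHom ρ f := by
  have hρz' : (ρ z : K) - 1 ≠ 0 := sub_ne_zero.2 (Units.val_eq_one.not.2 hρz)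
  refine ⟨f z / (ρ z - 1), fun g => ?_⟩
  have := hf.mul_sub_one_eq_of_commute (Subgroup.mem_center_iff.1 hz g).symm
  field_simp
  linear_combination -this

theorem eq_zero_of_mem_center (hf : IsCrossedHom ρ f) {z g : G} (hz : z ∈ Subgroup.center G)
    (hρz : ρ z = 1) (hρg : ρ g ≠ 1) : f z = 0 := by
  have := hf.mul_sub_one_eq_of_commute (Subgroup.mem_center_iff.1 hz g).symm
  rw [hρz, Units.val_one, sub_self, mul_zero, eq_comm, mul_eq_zero] at this
  exact this.resolve_right (sub_ne_zero.2 (Units.val_eq_one.not.2 hρg))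

theorem mul_eq_of_eq_zero (hf : IsCrossedHom ρ f) (g : G) {h : G} (hh : f h = 0) :
    f (g * h) = f g := by
  rw [hf, hh, mul_zero, zero_add]

theorem exists_factor_quotient (hf : IsCrossedHom ρ f) {H : Subgroup G}
    (hH : ∀ h ∈ H, f h = 0) : ∃ f' : G ⧸ H → K, ∀ g : G, f' g = f g :=
  ⟨Quotient.lift f fun a b hab => by
    rw [← mul_inv_cancel_left a b,
      hf.mul_eq_of_eq_zero a (hH _ (QuotientGroup.leftRel_apply.1 hab))],
    fun _ => rfl⟩

theorem exists_isCrossedHom_quotient (hf : IsCrossedHom ρ f) {N : Subgroup G} [N.Normal]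
    (hρ : N ≤ ρ.ker) (hN : ∀ n ∈ N, f n = 0) :
    ∃ f' : G ⧸ N → K, IsCrossedHom (QuotientGroup.lift N ρ hρ) f' ∧ ∀ g : G, f' g = f g := by
  obtain ⟨f', hf'⟩ := hf.exists_factor_quotient hN
  refine ⟨f', fun a b => ?_, hf'⟩
  induction a using QuotientGroup.induction_on
  induction b using QuotientGroup.induction_on
  rw [← QuotientGroup.mk_mul, hf', hf', hf', hf, QuotientGroup.lift_mk]

theorem isPrincipal_of_isNilpotent [Group.IsNilpotent G] (hf : IsCrossedHom ρ f) (hρ : ρ ≠ 1) :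
    IsPrincipalCrossedHom ρ f := by
  revert ρ f
  refine Group.nilpotent_center_quotient_ind
    (P := fun G _ _ => ∀ {ρ : G →* Kˣ} {f : G → K}, IsCrossedHom ρ f → ρ ≠ 1 →
      IsPrincipalCrossedHom ρ f) G ?_ ?_
  · intro G _ _ ρ f _ hρ
    exact absurd (Subsingleton.elim ρ 1) hρ
  · intro G _ _ ih ρ f hf hρ
    obtain ⟨g, hg⟩ := DFunLike.ne_iff.1 hρ
    by_cases hcenter : Subgroup.center G ≤ ρ.ker
    · obtain ⟨f', hf', hff'⟩ := hf.exists_isCrossedHom_quotient hcenter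
        fun z hz => hf.eq_zero_of_mem_center hz (hcenter hz) hg
      obtain ⟨x, hx⟩ := ih hf' (DFunLike.ne_iff.2 ⟨(g : G ⧸ Subgroup.center G), hg⟩)
      exact ⟨x, fun a => by simpa [hff'] using hx a⟩
    · obtain ⟨z, hz, hρz⟩ := SetLike.not_le_iff_exists.1 hcenter
      exact hf.isPrincipal_of_mem_center hz hρz

theorem isPrincipal_of_forall_mem_eq_zero [CharZero K] (hf : IsCrossedHom ρ f) {H : Subgroup G}
    [H.FiniteIndex] (hH : ∀ h ∈ H, f h = 0) : IsPrincipalCrossedHom ρ f := by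
  obtain ⟨f', hf'⟩ := hf.exists_factor_quotient hH
  have hsmul (g : G) (q : G ⧸ H) : f' (g • q) = ρ g * f' q + f g := by
    induction q using QuotientGroup.induction_on
    rw [MulAction.Quotient.smul_mk, hf', hf', smul_eq_mul, hf]
  have : Fintype (G ⧸ H) := Fintype.ofFinite _
  have hcard : (Fintype.card (G ⧸ H) : K) ≠ 0 := Nat.cast_ne_zero.2 Fintype.card_ne_zero
  set S := ∑ q, f' q
  have hS (g : G) : S = ρ g * S + Fintype.card (G ⧸ H) * f g := by
    calc S = ∑ q, f' (g • q) := (Fintype.sum_equiv (MulAction.toPerm g) _ _ fun _ => rfl).symm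
      _ = ρ g * S + Fintype.card (G ⧸ H) * f g := by
        simp only [hsmul, Finset.sum_add_distrib, ← Finset.mul_sum, Finset.sum_const,
          Finset.card_univ, nsmul_eq_mul, S]
  refine ⟨-S / Fintype.card (G ⧸ H), fun g => ?_⟩
  field_simp
  linear_combination hS g

theorem isPrincipal_of_isPrincipal_comp_subtype [CharZero K] (hf : IsCrossedHom ρ f)
    {H : Subgroup G} [H.FiniteIndex]
    (hH : IsPrincipalCrossedHom (ρ.comp H.subtype) (f ∘ H.subtype)) :
    IsPrincipalCrossedHom ρ f := by
  obtain ⟨x, hx⟩ := hH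
  obtain ⟨y, hy⟩ := (hf.sub_principal x).isPrincipal_of_forall_mem_eq_zero
    fun h hh => sub_eq_zero.2 (hx ⟨h, hh⟩).symm
  exact ⟨x + y, fun g => by linear_combination hy g⟩

end IsCrossedHom

theorem isZero_groupCohomology_one_oneDimRep {G : Type} [Group G] {ρ : G →* ℂˣ}
    (h : ∀ f : G → ℂ, IsCrossedHom ρ f → IsPrincipalCrossedHom ρ f) :
    Limits.IsZero (groupCohomology (Rep.of (oneDimRep G ρ)) 1) := by
  have : Subsingleton (groupCohomology.H1 (Rep.of (oneDimRep G ρ))) := by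
    refine subsingleton_of_forall_eq 0 fun y => groupCohomology.H1_induction_on y fun f => ?_
    refine (groupCohomology.H1π_eq_zero_iff f).2 ?_
    obtain ⟨x, hx⟩ := h f fun a b => (groupCohomology.mem_cocycles₁_iff _).1 f.2 a b
    exact ⟨x, funext hx⟩
  exact ModuleCat.isZero_of_subsingleton _

theorem groupCohomology_one_eq_zero_general (G : Type) [Group G] (H : Subgroup G)
    [H.FiniteIndex] [Group.IsNilpotent H]
    (ρ : G →* ℂˣ) (hρ : ∃ h ∈ H, ρ h ≠ 1) :
    Limits.IsZero (groupCohomology (Rep.of (oneDimRep G ρ)) 1) := by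
  refine isZero_groupCohomology_one_oneDimRep fun f hf =>
    hf.isPrincipal_of_isPrincipal_comp_subtype ((hf.comp H.subtype).isPrincipal_of_isNilpotent ?_)
  obtain ⟨h, hH, hρh⟩ := hρ
  exact DFunLike.ne_iff.2 ⟨⟨h, hH⟩, hρh⟩

/-- If `H ≤ G` is a finite-index subgroup which is finitely generated and nilpotent, and
`ρ : G → ℂˣ` is a homomorphism whose restriction to `H` is nontrivial, then the first
group cohomology of `G` with coefficients in the one-dimensional representation `ℂ_ρ`
vanishes. -/
theorem groupCohomology_one_eq_zero (G : Type) [Group G] (H : Subgroup G)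
    [H.FiniteIndex] [Group.FG H] [Group.IsNilpotent H]
    (ρ : G →* ℂˣ) (hρ : ∃ h ∈ H, ρ h ≠ 1) :
    Limits.IsZero (groupCohomology (Rep.of (oneDimRep G ρ)) 1) :=
  groupCohomology_one_eq_zero_general G H ρ hρ
end
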